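/- arXiv:2601.15448 — 6 statements merged into one kernel-verified Lean document; each statement's English description precedes it below -/
import Mathlib

section
/- For every ε > 0 there is a constant C such that for all r ∈ ℕ and m ∈ ℤ, the number s(r;m) of solutions x modulo r to x^2 ≡ m (mod r) satisfies s(r;m) ≤ C · r^ε · √(gcd(r, m)). -/
lemma fiber_card_le (n M : ℕ) (hn : n ≠ 0) (hM : M ≠ 0) (hd : M ∣ n) (z : ZMod M) :
    Nat.card {y : ZMod n // ((y.val : ℕ) : ZMod M) = z} ≤ n / M := by
  haveI : NeZero n := ⟨hn⟩
  haveI : NeZero M := ⟨hM⟩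
  have hfin : Nat.card (Fin (n / M)) = n / M := by simp
  rw [← hfin]
  apply Nat.card_le_card_of_injective
    (fun y => (⟨y.1.val / M, Nat.div_lt_div_of_lt_of_dvd hd (ZMod.val_lt y.1)⟩ : Fin (n/M)))
  rintro ⟨y, hy⟩ ⟨y', hy'⟩ h
  simp only [Fin.mk.injEq] at h
  have hmod : y.val % M = y'.val % M := by
    have h1 : (y.val : ZMod M).val = (y'.val : ZMod M).val := by rw [hy, hy']
    rwa [ZMod.val_natCast, ZMod.val_natCast] at h1
  have : y.val = y'.val := by
    have e1 := (Nat.div_add_mod y.val M).symm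
    have e2 := (Nat.div_add_mod y'.val M).symm
    rw [e1, e2, h, hmod]
  exact Subtype.ext (ZMod.val_injective n this)

lemma sol_iff (n : ℕ) [NeZero n] (m : ℤ) (y : ZMod n) :
    y ^ 2 = (m : ZMod n) ↔ (n : ℤ) ∣ ((y.val : ℤ) ^ 2 - m) := by
  rw [← ZMod.intCast_zmod_eq_zero_iff_dvd]
  push_cast
  rw [ZMod.natCast_val, ZMod.cast_id, sub_eq_zero]

lemma primepow_bound (p k : ℕ) (hp : p.Prime) (hk : 1 ≤ k) (m : ℤ) :
    Nat.card {x : ZMod (p^k) // x ^ 2 = (m : ZMod (p^k))} ^ 2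
      ≤ 16 * Int.gcd ((p:ℤ)^k) m := by
  haveI : NeZero (p^k) := ⟨pow_ne_zero _ hp.pos.ne'⟩
  have hp1 : 1 < p := hp.one_lt
  -- gcd is a power of p
  have hgnat : Int.gcd ((p:ℤ)^k) m = Nat.gcd (p^k) m.natAbs := by
    unfold Int.gcd
    congr 1
  obtain ⟨c, hck, hgcd⟩ : ∃ c ≤ k, Nat.gcd (p^k) m.natAbs = p ^ c :=
    (Nat.dvd_prime_pow hp).mp (Nat.gcd_dvd_left _ _)
  have hcm : (p:ℤ)^c ∣ m := by
    have h1 : p ^ c ∣ m.natAbs := hgcd ▸ Nat.gcd_dvd_right (p^k) m.natAbs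
    have h2 : ((p^c : ℕ) : ℤ) ∣ m := Int.natCast_dvd.mpr h1
    exact_mod_cast h2
  rw [hgnat, hgcd]
  by_cases hcase : c = k
  · -- p^k | m : all solutions divisible by p^ceil(k/2)
    rw [hcase] at hcm
    have hmk : (p:ℤ)^k ∣ m := hcm
    rw [hcase]
    set j := k - k / 2 with hj
    have hjk : j ≤ k := Nat.sub_le _ _
    have hsub : {x : ZMod (p^k) | x ^ 2 = (m : ZMod (p^k))} ⊆
        {y : ZMod (p^k) | ((y.val : ℕ) : ZMod (p^j)) = 0} := by
      intro y hy
      simp only [Set.mem_setOf_eq] at hy ⊢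
      rw [ZMod.natCast_eq_zero_iff]
      rcases eq_or_ne y.val 0 with h0 | h0
      · simp [h0]
      have hdvd2 : (p:ℤ)^k ∣ (y.val : ℤ)^2 := by
        have h1 := (sol_iff _ m y).mp hy
        rw [Nat.cast_pow] at h1
        have := dvd_add h1 hmk
        simpa using this
      have hdvdn : p^k ∣ y.val^2 := by
        have h2 : ((p^k : ℕ) : ℤ) ∣ ((y.val^2 : ℕ) : ℤ) := by push_cast; exact hdvd2
        exact_mod_cast h2
      have hfle : k ≤ (y.val^2).factorization p :=
        (Nat.Prime.pow_dvd_iff_le_factorization hp (by positivity)).mp hdvdn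
      rw [Nat.factorization_pow, Finsupp.smul_apply, smul_eq_mul] at hfle
      have : j ≤ y.val.factorization p := by omega
      exact (Nat.Prime.pow_dvd_iff_le_factorization hp h0).mpr this
    have hfib := fiber_card_le (p^k) (p^j) (pow_ne_zero _ hp.pos.ne')
      (pow_ne_zero _ hp.pos.ne') (pow_dvd_pow p hjk) 0
    rw [Nat.pow_div hjk hp.pos] at hfib
    have h1 : Nat.card {x : ZMod (p^k) // x ^ 2 = (m : ZMod (p^k))} ≤ p ^ (k - j) := by
      calc Nat.card {x : ZMod (p^k) // x ^ 2 = (m : ZMod (p^k))}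
          = ({x : ZMod (p^k) | x ^ 2 = (m : ZMod (p^k))}).ncard := (Nat.card_coe_set_eq _)
        _ ≤ ({y : ZMod (p^k) | ((y.val : ℕ) : ZMod (p^j)) = 0}).ncard :=
            Set.ncard_le_ncard hsub (Set.toFinite _)
        _ ≤ p ^ (k - j) := by rw [← Nat.card_coe_set_eq]; exact hfib
    calc Nat.card {x : ZMod (p^k) // x ^ 2 = (m : ZMod (p^k))} ^ 2
        ≤ (p ^ (k - j)) ^ 2 := Nat.pow_le_pow_left h1 2
      _ = p ^ (2 * (k - j)) := by rw [← pow_mul, mul_comm]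
      _ ≤ p ^ k := Nat.pow_le_pow_right hp.pos (by omega)
      _ ≤ 16 * p ^ k := by omega
  · -- c < k
    have hck' : c < k := lt_of_le_of_ne hck hcase
    have hnd : ¬ ((p:ℤ)^(c+1) ∣ m) := by
      intro hdvd
      have h1 : p^(c+1) ∣ m.natAbs := Int.natCast_dvd.mp (by push_cast; exact hdvd)
      have h2 : p^(c+1) ∣ p^c := hgcd ▸ Nat.dvd_gcd (pow_dvd_pow p (by omega)) h1
      exact absurd (Nat.pow_dvd_pow_iff_le_right hp1 |>.mp h2) (by omega)
    -- every solution has valuation exactly c/2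
    have key : ∀ y : ZMod (p^k), y ^ 2 = (m : ZMod (p^k)) →
        y.val ≠ 0 ∧ 2 * y.val.factorization p = c := by
      intro y hy
      have hsol : (p:ℤ)^k ∣ (y.val : ℤ)^2 - m := by
        have := (sol_iff _ m y).mp hy
        rwa [Nat.cast_pow] at this
      have hdvd2 : (p:ℤ)^c ∣ (y.val : ℤ)^2 := by
        have h1 : (p:ℤ)^c ∣ (y.val : ℤ)^2 - m := (pow_dvd_pow _ hck).trans hsol
        have := dvd_add h1 hcm
        simpa using this
      have hnot2 : ¬ ((p:ℤ)^(c+1) ∣ (y.val : ℤ)^2) := by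
        intro hdd
        apply hnd
        have h1 : (p:ℤ)^(c+1) ∣ (y.val : ℤ)^2 - m := (pow_dvd_pow _ (by omega)).trans hsol
        have := dvd_sub hdd h1
        simpa using this
      have h0 : y.val ≠ 0 := by
        intro h
        apply hnot2
        simp [h]
      refine ⟨h0, ?_⟩
      have hdn : p^c ∣ y.val^2 := by
        have h2 : ((p^c : ℕ) : ℤ) ∣ ((y.val^2 : ℕ) : ℤ) := by push_cast; exact hdvd2
        exact_mod_cast h2
      have hnn : ¬ (p^(c+1) ∣ y.val^2) := by
        intro h
        apply hnot2
        have h2 : ((p^(c+1) : ℕ) : ℤ) ∣ ((y.val^2 : ℕ) : ℤ) := Int.natCast_dvd_natCast.mpr h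
        push_cast at h2; exact h2
      have hle : c ≤ (y.val^2).factorization p :=
        (Nat.Prime.pow_dvd_iff_le_factorization hp (by positivity)).mp hdn
      have hlt : ¬ (c+1 ≤ (y.val^2).factorization p) := fun h =>
        hnn ((Nat.Prime.pow_dvd_iff_le_factorization hp (by positivity)).mpr h)
      rw [Nat.factorization_pow, Finsupp.smul_apply, smul_eq_mul] at hle hlt
      omega
    rcases isEmpty_or_nonempty {x : ZMod (p^k) // x ^ 2 = (m : ZMod (p^k))} with hE | hNE
    · simp [Nat.card_of_isEmpty]
    obtain ⟨x₀, hx₀⟩ := hNE.some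
    obtain ⟨hX0, hXa⟩ := key x₀ hx₀
    set a := x₀.val.factorization p with ha
    set E := if p = 2 then 1 else 0 with hE
    set j := k - (a + E) with hj
    have hjk : j ≤ k := Nat.sub_le _ _
    have hEfact : (2 : ℕ).factorization p ≤ E := by
      rcases eq_or_ne p 2 with h2 | h2
      · subst h2; simp [hE, Nat.Prime.factorization_self Nat.prime_two]
      · rw [Nat.factorization_eq_zero_of_not_dvd]
        · simp
        · intro hpd
          exact h2 ((Nat.prime_dvd_prime_iff_eq hp Nat.prime_two).mp hpd)
    -- every solution is ≡ ±x₀ mod p^j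
    have main : ∀ y : ZMod (p^k), y ^ 2 = (m : ZMod (p^k)) →
        ((y.val : ℕ) : ZMod (p^j)) = ((x₀.val : ℕ) : ZMod (p^j)) ∨
        ((y.val : ℕ) : ZMod (p^j)) = -((x₀.val : ℕ) : ZMod (p^j)) := by
      intro y hy
      obtain ⟨hY0, hYa⟩ := key y hy
      have hprod : (p:ℤ)^k ∣ ((y.val : ℤ) - (x₀.val : ℤ)) * ((y.val : ℤ) + (x₀.val : ℤ)) := by
        have h1 := (sol_iff _ m y).mp hy
        have h2 := (sol_iff _ m x₀).mp hx₀
        rw [Nat.cast_pow] at h1 h2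
        have := dvd_sub h1 h2
        have heq : (y.val : ℤ)^2 - m - ((x₀.val : ℤ)^2 - m) = ((y.val : ℤ) - (x₀.val : ℤ)) * ((y.val : ℤ) + (x₀.val : ℤ)) := by ring
        rwa [heq] at this
      rcases eq_or_ne ((y.val : ℤ) - (x₀.val : ℤ)) 0 with hYX | hYX
      · left
        have heq : (y.val : ℤ) = (x₀.val : ℤ) := by omega
        have : y.val = x₀.val := by exact_mod_cast heq
        rw [this]
      have hYX' : (y.val : ℤ) + (x₀.val : ℤ) ≠ 0 := by
        have h1 : (0:ℤ) ≤ (y.val : ℤ) := Int.natCast_nonneg _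
        have h2 : (0:ℤ) ≤ (x₀.val : ℤ) := Int.natCast_nonneg _
        intro h; apply hYX; omega
      set u := ((y.val : ℤ) - (x₀.val : ℤ)).natAbs.factorization p with hu
      set w := ((y.val : ℤ) + (x₀.val : ℤ)).natAbs.factorization p with hw
      have huw : k ≤ u + w := by
        have h1 : p^k ∣ ((y.val : ℤ) - (x₀.val : ℤ)).natAbs * ((y.val : ℤ) + (x₀.val : ℤ)).natAbs := by
          rw [← Int.natAbs_mul]
          exact Int.natCast_dvd.mp (by push_cast; exact hprod)
        have h2 := (Nat.Prime.pow_dvd_iff_le_factorization hp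
          (Nat.mul_ne_zero (Int.natAbs_ne_zero.mpr hYX) (Int.natAbs_ne_zero.mpr hYX'))).mp h1
        rwa [Nat.factorization_mul (Int.natAbs_ne_zero.mpr hYX) (Int.natAbs_ne_zero.mpr hYX'),
          Finsupp.add_apply] at h2
      have hmin : min u w ≤ E + a := by
        have hdvd1 : (p:ℤ)^(min u w) ∣ (y.val : ℤ) - (x₀.val : ℤ) := by
          have := Int.natCast_dvd.mpr
            ((Nat.Prime.pow_dvd_iff_le_factorization hp (Int.natAbs_ne_zero.mpr hYX)).mpr
              (min_le_left u w))
          exact_mod_cast this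
        have hdvd2 : (p:ℤ)^(min u w) ∣ (y.val : ℤ) + (x₀.val : ℤ) := by
          have := Int.natCast_dvd.mpr
            ((Nat.Prime.pow_dvd_iff_le_factorization hp (Int.natAbs_ne_zero.mpr hYX')).mpr
              (min_le_right u w))
          exact_mod_cast this
        have hdvdsum : (p:ℤ)^(min u w) ∣ 2 * (y.val : ℤ) := by
          have := dvd_add hdvd2 hdvd1
          have heq : ((y.val : ℤ) + (x₀.val : ℤ)) + ((y.val : ℤ) - (x₀.val : ℤ)) = 2 * (y.val : ℤ) := by ring
          rwa [heq] at this
        have hdnat : p^(min u w) ∣ 2 * y.val := by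
          have h' : ((p^(min u w) : ℕ) : ℤ) ∣ ((2 * y.val : ℕ) : ℤ) := by
            push_cast; exact hdvdsum
          exact_mod_cast h'
        have h2Y : (2 * y.val) ≠ 0 := by positivity
        have := (Nat.Prime.pow_dvd_iff_le_factorization hp h2Y).mp hdnat
        rw [Nat.factorization_mul (by norm_num) hY0, Finsupp.add_apply] at this
        have haa : y.val.factorization p = a := by omega
        omega
      have hmax : j ≤ u ∨ j ≤ w := by omega
      rcases hmax with h | h
      · left
        have hd : (p:ℤ)^j ∣ (y.val : ℤ) - (x₀.val : ℤ) := by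
          have := Int.natCast_dvd.mpr
            ((Nat.Prime.pow_dvd_iff_le_factorization hp (Int.natAbs_ne_zero.mpr hYX)).mpr h)
          exact_mod_cast this
        have : (((y.val : ℤ) - (x₀.val : ℤ) : ℤ) : ZMod (p^j)) = 0 := by
          rw [ZMod.intCast_zmod_eq_zero_iff_dvd]
          exact_mod_cast hd
        push_cast at this
        linear_combination this
      · right
        have hd : (p:ℤ)^j ∣ (y.val : ℤ) + (x₀.val : ℤ) := by
          have := Int.natCast_dvd.mpr
            ((Nat.Prime.pow_dvd_iff_le_factorization hp (Int.natAbs_ne_zero.mpr hYX')).mpr h)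
          exact_mod_cast this
        have : (((y.val : ℤ) + (x₀.val : ℤ) : ℤ) : ZMod (p^j)) = 0 := by
          rw [ZMod.intCast_zmod_eq_zero_iff_dvd]
          exact_mod_cast hd
        push_cast at this
        linear_combination this
    -- cardinality bound via two fibers
    have hcard2 : Nat.card {x : ZMod (p^k) // x ^ 2 = (m : ZMod (p^k))}
        ≤ 2 * p ^ (k - j) := by
      have hsub : {x : ZMod (p^k) | x ^ 2 = (m : ZMod (p^k))} ⊆
          {y : ZMod (p^k) | ((y.val : ℕ) : ZMod (p^j)) = ((x₀.val : ℕ) : ZMod (p^j))} ∪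
          {y : ZMod (p^k) | ((y.val : ℕ) : ZMod (p^j)) = -((x₀.val : ℕ) : ZMod (p^j))} := by
        intro y hy
        exact main y hy
      have hfib1 := fiber_card_le (p^k) (p^j) (pow_ne_zero _ hp.pos.ne')
        (pow_ne_zero _ hp.pos.ne') (pow_dvd_pow p hjk) ((x₀.val : ℕ) : ZMod (p^j))
      have hfib2 := fiber_card_le (p^k) (p^j) (pow_ne_zero _ hp.pos.ne')
        (pow_ne_zero _ hp.pos.ne') (pow_dvd_pow p hjk) (-((x₀.val : ℕ) : ZMod (p^j)))
      rw [Nat.pow_div hjk hp.pos] at hfib1 hfib2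
      calc Nat.card {x : ZMod (p^k) // x ^ 2 = (m : ZMod (p^k))}
          = ({x : ZMod (p^k) | x ^ 2 = (m : ZMod (p^k))}).ncard := (Nat.card_coe_set_eq _)
        _ ≤ ({y : ZMod (p^k) | ((y.val : ℕ) : ZMod (p^j)) = ((x₀.val : ℕ) : ZMod (p^j))} ∪
            {y : ZMod (p^k) | ((y.val : ℕ) : ZMod (p^j)) = -((x₀.val : ℕ) : ZMod (p^j))}).ncard :=
            Set.ncard_le_ncard hsub (Set.toFinite _)
        _ ≤ ({y : ZMod (p^k) | ((y.val : ℕ) : ZMod (p^j)) = ((x₀.val : ℕ) : ZMod (p^j))}).ncard +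
            ({y : ZMod (p^k) | ((y.val : ℕ) : ZMod (p^j)) = -((x₀.val : ℕ) : ZMod (p^j))}).ncard :=
            Set.ncard_union_le _ _
        _ ≤ p ^ (k - j) + p ^ (k - j) := by
            apply Nat.add_le_add
            · rw [← Nat.card_coe_set_eq]; exact hfib1
            · rw [← Nat.card_coe_set_eq]; exact hfib2
        _ = 2 * p ^ (k - j) := by ring
    have hkj : k - j ≤ a + E := by omega
    have hpE : p ^ E ≤ 2 := by
      rcases eq_or_ne p 2 with h2 | h2
      · subst h2; simp [hE]
      · simp [hE, h2]
    calc Nat.card {x : ZMod (p^k) // x ^ 2 = (m : ZMod (p^k))} ^ 2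
        ≤ (2 * p ^ (k - j)) ^ 2 := Nat.pow_le_pow_left hcard2 2
      _ ≤ (2 * p ^ (a + E)) ^ 2 := by
          gcongr
          exact hp.one_lt.le
      _ = 4 * (p ^ E)^2 * (p ^ a) ^ 2 := by ring
      _ ≤ 4 * 4 * (p ^ a) ^ 2 := by
          gcongr
          calc (p ^ E) ^ 2 ≤ 2 ^ 2 := Nat.pow_le_pow_left hpE 2
            _ = 4 := by norm_num
      _ = 16 * p ^ (2 * a) := by rw [mul_comm 2 a, pow_mul]
      _ = 16 * p ^ c := by rw [hXa]

lemma crt_mul (a b : ℕ) (h : Nat.Coprime a b) (m : ℤ) :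
    Nat.card {x : ZMod (a*b) // x ^ 2 = (m : ZMod (a*b))}
      = Nat.card {x : ZMod a // x ^ 2 = (m : ZMod a)}
        * Nat.card {x : ZMod b // x ^ 2 = (m : ZMod b)} := by
  rw [← Nat.card_prod]
  apply Nat.card_congr
  refine Equiv.trans ?_ (Equiv.subtypeProdEquivProd)
  apply (ZMod.chineseRemainder h).toEquiv.subtypeEquiv
  intro x
  constructor
  · intro hx
    constructor
    · have := congrArg (fun z => ((ZMod.chineseRemainder h) z).1) hx
      simpa using this
    · have := congrArg (fun z => ((ZMod.chineseRemainder h) z).2) hx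
      simpa using this
  · intro ⟨h1, h2⟩
    have : (ZMod.chineseRemainder h) (x ^ 2) = (ZMod.chineseRemainder h) ((m : ZMod (a*b))) := by
      apply Prod.ext
      · simpa using h1
      · simpa using h2
    exact (ZMod.chineseRemainder h).injective this

lemma main_nat : ∀ r : ℕ, 1 ≤ r → ∀ m : ℤ,
    Nat.card {x : ZMod r // x ^ 2 = (m : ZMod r)} ^ 2
      ≤ 16 ^ r.primeFactors.card * Int.gcd (r : ℤ) m := by
  intro r
  induction r using Nat.strong_induction_on with
  | _ r ih =>
  intro hr m
  rcases eq_or_lt_of_le hr with h1 | h1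
  · -- r = 1
    have hr1 : r = 1 := h1.symm
    subst hr1
    haveI hss : Subsingleton {x : ZMod 1 // x ^ 2 = (m : ZMod 1)} :=
      ⟨fun a b => Subtype.ext (Subsingleton.elim a.1 b.1)⟩
    have hcard : Nat.card {x : ZMod 1 // x ^ 2 = (m : ZMod 1)} ≤ 1 := by
      rcases isEmpty_or_nonempty {x : ZMod 1 // x ^ 2 = (m : ZMod 1)} with hE | hNE
      · simp [Nat.card_of_isEmpty]
      · exact le_of_eq Nat.card_unique
    have : (1:ℕ).primeFactors = ∅ := Nat.primeFactors_one
    rw [this]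
    have hg1 : Int.gcd ((1:ℕ) : ℤ) m = 1 := by
      rw [Nat.cast_one, Int.one_gcd]
    rw [hg1]
    simp only [Finset.card_empty, pow_zero, one_mul]
    calc Nat.card {x : ZMod 1 // x ^ 2 = (m : ZMod 1)} ^ 2 ≤ 1 ^ 2 := Nat.pow_le_pow_left hcard 2
      _ = 1 := one_pow 2
  · -- r ≥ 2
    have hr0 : r ≠ 0 := by omega
    set p := r.minFac with hpdef
    have hp : p.Prime := Nat.minFac_prime (by omega)
    set k := r.factorization p with hkdef
    have hpr : p ∣ r := Nat.minFac_dvd r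
    have hk : 1 ≤ k := by
      rw [hkdef]
      exact (Nat.Prime.factorization_pos_of_dvd hp hr0 hpr)
    set t := r / p ^ k with htdef
    have hrt : r = p ^ k * t := (Nat.ordProj_mul_ordCompl_eq_self r p).symm
    have hpt : ¬ p ∣ t := Nat.not_dvd_ordCompl hp hr0
    have hco : Nat.Coprime (p ^ k) t :=
      Nat.Coprime.pow_left _ ((Nat.Prime.coprime_iff_not_dvd hp).mpr hpt)
    have ht0 : t ≠ 0 := by
      intro h
      rw [h, mul_zero] at hrt
      exact hr0 hrt
    have htr : t < r := by
      have hineq : 1 < p ^ k :=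
        lt_of_lt_of_le hp.one_lt (Nat.le_self_pow (by omega) p)
      rw [htdef]
      exact Nat.div_lt_self (by omega) hineq
    have hIH := ih t htr (Nat.one_le_iff_ne_zero.mpr ht0) m
    have hPP := primepow_bound p k hp hk m
    -- rewrite goal
    rw [hrt]
    rw [crt_mul _ _ hco m]
    -- gcd multiplicativity
    have hgcd : Int.gcd ((p ^ k * t : ℕ) : ℤ) m
        = Int.gcd ((p ^ k : ℕ) : ℤ) m * Int.gcd ((t : ℕ) : ℤ) m := by
      have : ∀ n : ℕ, Int.gcd ((n : ℕ) : ℤ) m = Nat.gcd n m.natAbs := fun n => rfl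
      rw [this, this, this, Nat.gcd_comm (p^k*t), Nat.Coprime.gcd_mul _ hco,
        Nat.gcd_comm m.natAbs (p^k), Nat.gcd_comm m.natAbs t]
    -- primeFactors
    have hpf : (p ^ k * t).primeFactors.card = t.primeFactors.card + 1 := by
      rw [Nat.primeFactors_mul (pow_ne_zero _ hp.pos.ne') ht0,
        Nat.primeFactors_prime_pow (by omega) hp]
      have hnotmem : p ∉ t.primeFactors := by
        intro hmem
        exact hpt (Nat.dvd_of_mem_primeFactors hmem)
      rw [← Finset.insert_eq, Finset.card_insert_of_notMem hnotmem]
    rw [hpf, hgcd]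
    have hPP' : Nat.card {x : ZMod (p^k) // x ^ 2 = (m : ZMod (p^k))} ^ 2
        ≤ 16 * Int.gcd ((p ^ k : ℕ) : ℤ) m := by
      have : ((p ^ k : ℕ) : ℤ) = (p:ℤ)^k := by push_cast; ring
      rw [this]
      exact hPP
    calc (Nat.card {x : ZMod (p^k) // x ^ 2 = (m : ZMod (p^k))}
          * Nat.card {x : ZMod t // x ^ 2 = (m : ZMod t)}) ^ 2
        = Nat.card {x : ZMod (p^k) // x ^ 2 = (m : ZMod (p^k))} ^ 2
          * Nat.card {x : ZMod t // x ^ 2 = (m : ZMod t)} ^ 2 := by ring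
      _ ≤ (16 * Int.gcd ((p ^ k : ℕ) : ℤ) m) * (16 ^ t.primeFactors.card * Int.gcd (t : ℤ) m) :=
          Nat.mul_le_mul hPP' hIH
      _ = 16 ^ (t.primeFactors.card + 1) * (Int.gcd ((p ^ k : ℕ) : ℤ) m * Int.gcd ((t:ℕ) : ℤ) m) := by
          ring

/-- For every `ε > 0` there is `C > 0` such that for all `r ≥ 1` and all `m : ℤ`, the number
of solutions `x` modulo `r` of `x^2 ≡ m (mod r)` is at most `C · r^ε · √(gcd(r,m))`. -/
theorem stmt_1 : ∀ ε : ℝ, 0 < ε → ∃ C : ℝ, 0 < C ∧ ∀ r : ℕ, 1 ≤ r → ∀ m : ℤ,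
    (Nat.card {x : ZMod r // x ^ 2 = (m : ZMod r)} : ℝ)
      ≤ C * (r : ℝ) ^ ε * Real.sqrt (Int.gcd (r : ℤ) m) := by
  intro ε hε
  set P := ⌈(4:ℝ) ^ (1/ε)⌉₊ + 1 with hP
  refine ⟨(4:ℝ)^P, by positivity, ?_⟩
  intro r hr m
  set ω := r.primeFactors.card with hω
  set g := Int.gcd (r : ℤ) m with hg
  -- Step 1 : N ≤ 4^ω * sqrt g
  have h1 : (Nat.card {x : ZMod r // x ^ 2 = (m : ZMod r)} : ℝ)
      ≤ 4 ^ ω * Real.sqrt g := by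
    have hnat := main_nat r hr m
    have hcast : ((Nat.card {x : ZMod r // x ^ 2 = (m : ZMod r)} : ℝ)) ^ 2
        ≤ ((4:ℝ) ^ ω * Real.sqrt g) ^ 2 := by
      have hr2 : ((4:ℝ) ^ ω * Real.sqrt g) ^ 2 = (16:ℝ)^ω * g := by
        rw [mul_pow, Real.sq_sqrt (by positivity), ← pow_mul, mul_comm ω 2, pow_mul]
        norm_num
      rw [hr2]
      calc ((Nat.card {x : ZMod r // x ^ 2 = (m : ZMod r)} : ℝ)) ^ 2
          = ((Nat.card {x : ZMod r // x ^ 2 = (m : ZMod r)} ^ 2 : ℕ) : ℝ) := by push_cast; ring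
        _ ≤ ((16 ^ ω * g : ℕ) : ℝ) := by exact_mod_cast hnat
        _ = (16:ℝ)^ω * g := by push_cast; ring
    have h4 : (0:ℝ) ≤ 4 ^ ω * Real.sqrt g := by positivity
    nlinarith [Nat.cast_nonneg (α := ℝ) (Nat.card {x : ZMod r // x ^ 2 = (m : ZMod r)})]
  -- Step 2 : 4^ω ≤ 4^P * r^ε
  have h2 : (4:ℝ) ^ ω ≤ (4:ℝ)^P * (r:ℝ) ^ ε := by
    have hsplit : (4:ℝ) ^ ω = (∏ p ∈ r.primeFactors.filter (fun p => p < P), (4:ℝ)) *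
        (∏ p ∈ r.primeFactors.filter (fun p => ¬ p < P), (4:ℝ)) := by
      rw [Finset.prod_filter_mul_prod_filter_not, Finset.prod_const, hω]
    have hsmall : (∏ p ∈ r.primeFactors.filter (fun p => p < P), (4:ℝ)) ≤ (4:ℝ)^P := by
      rw [Finset.prod_const]
      apply pow_le_pow_right₀ (by norm_num)
      calc (r.primeFactors.filter (fun p => p < P)).card
          ≤ (Finset.range P).card := Finset.card_le_card (by
            intro p hp
            simp only [Finset.mem_filter] at hp
            exact Finset.mem_range.mpr hp.2)
        _ = P := Finset.card_range P
    have hbig : (∏ p ∈ r.primeFactors.filter (fun p => ¬ p < P), (4:ℝ))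
        ≤ (r:ℝ) ^ ε := by
      have hstep1 : (∏ p ∈ r.primeFactors.filter (fun p => ¬ p < P), (4:ℝ))
          ≤ ∏ p ∈ r.primeFactors.filter (fun p => ¬ p < P), (p:ℝ) ^ ε := by
        apply Finset.prod_le_prod
        · intro i _; norm_num
        · intro i hi
          simp only [Finset.mem_filter, not_lt] at hi
          have hiP : P ≤ i := hi.2
          have h41 : ((4:ℝ) ^ (1/ε)) ^ ε = 4 := by
            rw [← Real.rpow_mul (by norm_num), one_div_mul_cancel hε.ne', Real.rpow_one]
          rw [← h41]
          apply Real.rpow_le_rpow (by positivity) ?_ hε.le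
          calc (4:ℝ) ^ (1/ε) ≤ (⌈(4:ℝ) ^ (1/ε)⌉₊ : ℝ) := Nat.le_ceil _
            _ ≤ (i : ℝ) := by
                have : ⌈(4:ℝ) ^ (1/ε)⌉₊ ≤ i := by omega
                exact_mod_cast this
      have hstep2 : (∏ p ∈ r.primeFactors.filter (fun p => ¬ p < P), (p:ℝ) ^ ε)
          ≤ ∏ p ∈ r.primeFactors, (p:ℝ) ^ ε := by
        rw [← Finset.prod_filter_mul_prod_filter_not r.primeFactors (fun p => p < P)
          (fun p => (p:ℝ) ^ ε)]
        have hone : (1:ℝ) ≤ ∏ p ∈ r.primeFactors.filter (fun p => p < P), (p:ℝ) ^ ε := by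
          calc (1:ℝ) = ∏ p ∈ r.primeFactors.filter (fun p => p < P), 1 :=
              (Finset.prod_const_one).symm
            _ ≤ ∏ p ∈ r.primeFactors.filter (fun p => p < P), (p:ℝ) ^ ε := by
              apply Finset.prod_le_prod (fun i _ => zero_le_one)
              intro i hi
              have h1i : 1 ≤ (i:ℝ) := by
                have := (Nat.prime_of_mem_primeFactors (Finset.mem_of_mem_filter i hi)).one_lt
                exact_mod_cast this.le
              exact Real.one_le_rpow h1i hε.le
        exact le_mul_of_one_le_left (Finset.prod_nonneg (fun i _ => by positivity)) hone
      have hstep3 : (∏ p ∈ r.primeFactors, (p:ℝ) ^ ε)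
          = ((∏ p ∈ r.primeFactors, p : ℕ) : ℝ) ^ ε := by
        rw [Real.finset_prod_rpow _ _ (fun i _ => by positivity) ε]
        push_cast
        rfl
      have hstep4 : ((∏ p ∈ r.primeFactors, p : ℕ) : ℝ) ^ ε ≤ (r:ℝ) ^ ε := by
        apply Real.rpow_le_rpow (by positivity) ?_ hε.le
        exact_mod_cast Nat.le_of_dvd (by omega) (Nat.prod_primeFactors_dvd r)
      calc (∏ p ∈ r.primeFactors.filter (fun p => ¬ p < P), (4:ℝ))
          ≤ ∏ p ∈ r.primeFactors.filter (fun p => ¬ p < P), (p:ℝ) ^ ε := hstep1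
        _ ≤ ∏ p ∈ r.primeFactors, (p:ℝ) ^ ε := hstep2
        _ = ((∏ p ∈ r.primeFactors, p : ℕ) : ℝ) ^ ε := hstep3
        _ ≤ (r:ℝ) ^ ε := hstep4
    calc (4:ℝ) ^ ω
        = (∏ p ∈ r.primeFactors.filter (fun p => p < P), (4:ℝ)) *
          (∏ p ∈ r.primeFactors.filter (fun p => ¬ p < P), (4:ℝ)) := hsplit
      _ ≤ (4:ℝ)^P * (r:ℝ) ^ ε := by
          apply mul_le_mul hsmall hbig (Finset.prod_nonneg (fun i _ => by norm_num)) (by positivity)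
  calc (Nat.card {x : ZMod r // x ^ 2 = (m : ZMod r)} : ℝ)
      ≤ 4 ^ ω * Real.sqrt g := h1
    _ ≤ ((4:ℝ)^P * (r:ℝ) ^ ε) * Real.sqrt g :=
        mul_le_mul_of_nonneg_right h2 (Real.sqrt_nonneg _)
    _ = (4:ℝ)^P * (r:ℝ) ^ ε * Real.sqrt g := by ring
end

section
/- Suppose integers m₁, m₂, and x₁, x₂ satisfy x_i^2 ≡ j·m_i (mod r) for i = 1, 2 and x₁ - x₂ ≡ d (mod r), where gcd(r, j) = 1 and k is a multiplicative inverse of j modulo r. Set h = m₁ - m₂ and m = m₁ + m₂. Then h^2 + k^2·d^4 ≡ 2·k·d^2·m (mod r). -/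
/-! Since `j` is a unit modulo `r` with inverse `k`, each `mᵢ ≡ k·xᵢ²`; after substituting these and
`d ≡ x₁ - x₂`, the congruence becomes the polynomial identity
`(x₁² - x₂²)² + (x₁ - x₂)⁴ = 2 (x₁ - x₂)² (x₁² + x₂²)`, scaled by `k²`. -/

lemma eq_mul_sq_of_sq_eq_mul {M : Type*} [CommMonoid M] {j k x m : M} (hjk : j * k = 1)
    (h : x ^ 2 = j * m) : m = k * x ^ 2 := by
  rw [h, ← mul_assoc, mul_comm k, hjk, one_mul]

lemma sub_sq_add_sq_mul_sub_pow_four {R : Type*} [CommRing R] {j k m₁ m₂ x₁ x₂ : R}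
    (hjk : j * k = 1) (h₁ : x₁ ^ 2 = j * m₁) (h₂ : x₂ ^ 2 = j * m₂) :
    (m₁ - m₂) ^ 2 + k ^ 2 * (x₁ - x₂) ^ 4 = 2 * k * (x₁ - x₂) ^ 2 * (m₁ + m₂) := by
  rw [eq_mul_sq_of_sq_eq_mul hjk h₁, eq_mul_sq_of_sq_eq_mul hjk h₂]
  ring

/-- Squaring identity removing modular square roots: if `xᵢ² ≡ j·mᵢ (mod r)`,
`x₁ - x₂ ≡ d (mod r)` and `j·k ≡ 1 (mod r)`, then with `h = m₁ - m₂`, `m = m₁ + m₂`,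
`h² + k²·d⁴ ≡ 2·k·d²·m (mod r)`. -/
theorem stmt_5 (r : ℕ) (j k d m₁ m₂ x₁ x₂ : ℤ)
    (hjk : j * k ≡ 1 [ZMOD (r : ℤ)])
    (h1 : x₁ ^ 2 ≡ j * m₁ [ZMOD (r : ℤ)]) (h2 : x₂ ^ 2 ≡ j * m₂ [ZMOD (r : ℤ)])
    (hd : x₁ - x₂ ≡ d [ZMOD (r : ℤ)]) :
    (m₁ - m₂) ^ 2 + k ^ 2 * d ^ 4 ≡ 2 * k * d ^ 2 * (m₁ + m₂) [ZMOD (r : ℤ)] := by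
  rw [← ZMod.intCast_eq_intCast_iff] at hjk h1 h2 hd ⊢
  push_cast at hjk h1 h2 hd ⊢
  rw [← hd]
  exact sub_sq_add_sq_mul_sub_pow_four hjk h1 h2
end

section
/- Let a, b be nonzero integers and r ∈ ℕ with r > 1. The number of residue classes c modulo r with gcd(c, r) = 1 such that a ≡ c·b (mod r) is at most gcd(a, b) (indeed at most gcd(gcd(a,b), r)). -/
/-- For nonzero integers `a, b` and `r > 1`, the number of reduced residues `c` modulo `r`
with `a ≡ c·b (mod r)` is at most `gcd(a,b)`, and indeed at most `gcd(gcd(a,b), r)`. -/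
theorem stmt_7 (a b : ℤ) (ha : a ≠ 0) (hb : b ≠ 0) (r : ℕ) (hr : 1 < r) :
    ((Finset.Icc 1 r).filter
        (fun c => Nat.gcd c r = 1 ∧ a ≡ (c : ℤ) * b [ZMOD (r : ℤ)])).card
      ≤ Nat.gcd (Int.gcd a b) r ∧
    ((Finset.Icc 1 r).filter
        (fun c => Nat.gcd c r = 1 ∧ a ≡ (c : ℤ) * b [ZMOD (r : ℤ)])).card
      ≤ Int.gcd a b := by
  set S := ((Finset.Icc 1 r).filter
      (fun c => Nat.gcd c r = 1 ∧ a ≡ (c : ℤ) * b [ZMOD (r : ℤ)])) with hS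
  have hrpos : 0 < r := by omega
  have hgA : Int.gcd a b ≠ 0 := fun h => ha (Int.gcd_eq_zero_iff.mp h).1
  have hgApos : 0 < Int.gcd a b := Nat.pos_of_ne_zero hgA
  rcases S.eq_empty_or_nonempty with h | ⟨c0, hc0⟩
  · rw [h]; simp
  set g0 := Nat.gcd b.natAbs r with hg0
  have hg0pos : 0 < g0 := Nat.gcd_pos_of_pos_right _ hrpos
  set m := r / g0 with hm
  have hmg : m * g0 = r := Nat.div_mul_cancel (Nat.gcd_dvd_right _ _)
  have hmpos : 0 < m :=
    Nat.div_pos (Nat.le_of_dvd hrpos (Nat.gcd_dvd_right _ _)) hg0pos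
  -- unpack c0
  have hc0' := hc0
  rw [hS, Finset.mem_filter, Finset.mem_Icc] at hc0'
  obtain ⟨⟨hc01, hc0r⟩, _, hmod0⟩ := hc0'
  -- g0 divides b (as integers)
  have hgb : (g0 : ℤ) ∣ b :=
    dvd_trans (Int.natCast_dvd_natCast.mpr (Nat.gcd_dvd_left b.natAbs r))
      (Int.natAbs_dvd.mpr dvd_rfl)
  obtain ⟨b', hb'⟩ := hgb
  have hb'' : b = b' * (g0 : ℤ) := by rw [hb']; ring
  have hb'abs : b'.natAbs * g0 = b.natAbs := by
    rw [hb'']; rw [Int.natAbs_mul]; simp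
  have hcop : IsCoprime (m : ℤ) b' := by
    rw [Int.isCoprime_iff_gcd_eq_one]
    have h1 : Nat.Coprime (b.natAbs / g0) (r / g0) := Nat.coprime_div_gcd_div_gcd hg0pos
    have h2 : b'.natAbs = b.natAbs / g0 :=
      (Nat.div_eq_of_eq_mul_left hg0pos hb'abs.symm).symm
    have h3 := h1.symm
    rw [← hm] at h3
    rw [Int.gcd]
    simp only [Int.natAbs_natCast]
    rw [h2]
    exact h3
  -- key divisibility for any c ∈ S
  have key : ∀ c ∈ S, (m : ℤ) ∣ ((c : ℤ) - (c0 : ℤ)) := by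
    intro c hc
    rw [hS, Finset.mem_filter] at hc
    obtain ⟨_, _, hmodc⟩ := hc
    have hd : (r : ℤ) ∣ ((c0 : ℤ) * b - (c : ℤ) * b) := (hmodc.symm.trans hmod0).dvd
    have hd2 : ((m : ℤ) * (g0 : ℤ)) ∣ (((c0 : ℤ) - (c : ℤ)) * b' * (g0 : ℤ)) := by
      have e1 : ((m : ℤ) * (g0 : ℤ)) = (r : ℤ) := by exact_mod_cast hmg
      have e2 : ((c0 : ℤ) - (c : ℤ)) * b' * (g0 : ℤ) = (c0 : ℤ) * b - (c : ℤ) * b := by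
        rw [hb'']; ring
      rw [e1, e2]; exact hd
    have hg0ne : (g0 : ℤ) ≠ 0 := by exact_mod_cast hg0pos.ne'
    have hd3 : (m : ℤ) ∣ ((c0 : ℤ) - (c : ℤ)) * b' := (mul_dvd_mul_iff_right hg0ne).mp hd2
    have h4 := hcop.dvd_of_dvd_mul_right hd3
    have h5 := (dvd_neg).mpr h4
    rwa [neg_sub] at h5
  -- bound card S ≤ g0 via injection into Finset.range g0
  have hmain : S.card ≤ g0 := by
    have hinj := Finset.card_le_card_of_injOn (s := S) (t := Finset.range g0)
      (fun c => ((c + r - c0) % r) / m) ?_ ?_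
    · simpa using hinj
    · intro c _
      simp only [Finset.mem_coe, Finset.mem_range]
      rw [Nat.div_lt_iff_lt_mul hmpos]
      calc (c + r - c0) % r < r := Nat.mod_lt _ hrpos
        _ = g0 * m := by rw [← hmg, Nat.mul_comm]
    · intro c1 hc1 c2 hc2 heq
      have hc1S : c1 ∈ S := Finset.mem_coe.mp hc1
      have hc2S : c2 ∈ S := Finset.mem_coe.mp hc2
      have hc1r : 1 ≤ c1 ∧ c1 ≤ r := by
        have := hc1S; rw [hS, Finset.mem_filter, Finset.mem_Icc] at this; exact this.1
      have hc2r : 1 ≤ c2 ∧ c2 ≤ r := by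
        have := hc2S; rw [hS, Finset.mem_filter, Finset.mem_Icc] at this; exact this.1
      have hrm : m ∣ r := ⟨g0, hmg.symm⟩
      have hdvd1 : m ∣ (c1 + r - c0) % r := by
        rw [Nat.dvd_mod_iff hrm, ← Int.natCast_dvd_natCast]
        have e : ((c1 + r - c0 : ℕ) : ℤ) = ((c1 : ℤ) - c0) + r := by
          push_cast [Nat.cast_sub (by omega : c0 ≤ c1 + r)]; ring
        rw [e]
        exact dvd_add (key c1 hc1S) (by exact_mod_cast hrm)
      have hdvd2 : m ∣ (c2 + r - c0) % r := by
        rw [Nat.dvd_mod_iff hrm, ← Int.natCast_dvd_natCast]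
        have e : ((c2 + r - c0 : ℕ) : ℤ) = ((c2 : ℤ) - c0) + r := by
          push_cast [Nat.cast_sub (by omega : c0 ≤ c2 + r)]; ring
        rw [e]
        exact dvd_add (key c2 hc2S) (by exact_mod_cast hrm)
      have heq' : (c1 + r - c0) % r = (c2 + r - c0) % r := by
        obtain ⟨k1, hk1⟩ := hdvd1
        obtain ⟨k2, hk2⟩ := hdvd2
        simp only at heq
        rw [hk1, hk2, Nat.mul_div_cancel_left _ hmpos, Nat.mul_div_cancel_left _ hmpos] at heq
        rw [hk1, hk2, heq]
      have hmeq : Nat.ModEq r (c1 + r - c0) (c2 + r - c0) := heq'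
      have hmeq2 : Nat.ModEq r c1 c2 := by
        have h6 := hmeq.add_right c0
        rw [Nat.sub_add_cancel (by omega), Nat.sub_add_cancel (by omega)] at h6
        exact (Nat.ModEq.add_right_cancel' r h6)
      have hdd : (r : ℤ) ∣ ((c2 : ℤ) - c1) := (Nat.modEq_iff_dvd).mp hmeq2
      have hz : ((c2 : ℤ) - c1) = 0 := by
        apply Int.eq_zero_of_abs_lt_dvd hdd
        rw [abs_lt]
        constructor <;> push_cast <;> omega
      omega
  -- g0 divides gcd(gcd(a,b), r)
  have hga : (g0 : ℤ) ∣ a := by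
    obtain ⟨k, hk⟩ := hmod0.dvd
    have hgb2 : (g0 : ℤ) ∣ b := ⟨b', hb'⟩
    have hgr : (g0 : ℤ) ∣ (r : ℤ) :=
      Int.natCast_dvd_natCast.mpr (Nat.gcd_dvd_right b.natAbs r)
    have e : a = (c0 : ℤ) * b - (r : ℤ) * k := by linarith
    rw [e]
    exact dvd_sub (Dvd.dvd.mul_left hgb2 _) (Dvd.dvd.mul_right hgr _)
  have hdvdg : g0 ∣ Nat.gcd (Int.gcd a b) r := by
    apply Nat.dvd_gcd _ (Nat.gcd_dvd_right b.natAbs r)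
    apply Nat.dvd_gcd _ (Nat.gcd_dvd_left b.natAbs r)
    have := Int.natAbs_dvd_natAbs.mpr hga
    simpa using this
  have hle1 : S.card ≤ Nat.gcd (Int.gcd a b) r :=
    hmain.trans (Nat.le_of_dvd (Nat.gcd_pos_of_pos_right _ hrpos) hdvdg)
  exact ⟨hle1, hle1.trans (Nat.gcd_le_left r hgApos)⟩
end

section
/- Let r̃ > 1 be a natural number, c an integer with gcd(c, r̃) = 1, and Γ = {(x,y) ∈ ℤ² : x ≡ c·y (mod r̃)}. Suppose B = {(x,y) : |x| ≤ A, |y| ≤ B} with A, B ≥ 1 contains a nonzero lattice point v = (a,b) of Γ but no lattice point of Γ linearly independent from v. Then a·b ≠ 0. -/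
/-!
If, say, `a = 0`, then `c b ≡ 0`, so `r ∣ b` as `c` is a unit mod `r`. Reducing an inverse
`d` of `c` modulo `b` gives `|d| < |b| ≤ B`, so `(1, d)` is a point of `Γ` in the box that is
independent of `(0, b)`. If `b = 0`, then `r ∣ a` and the residue of `c` modulo `a` gives the
independent point `(c mod a, 1)`.
-/

theorem ZMod.exists_intCast_eq_abs_le {r : ℕ} {m : ℤ} {C : ℝ} (hm : m ≠ 0)
    (hm0 : (m : ZMod r) = 0) (hmC : |(m : ℝ)| ≤ C) (x : ZMod r) :
    ∃ y : ℤ, (y : ZMod r) = x ∧ |(y : ℝ)| ≤ C := by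
  refine ⟨(x.cast : ℤ) % m, ?_, ?_⟩
  · rw [Int.emod_def]
    push_cast
    rw [hm0, zero_mul, sub_zero]
  · have hlt : |(x.cast : ℤ) % m| < |m| :=
      (abs_of_nonneg (Int.emod_nonneg _ hm)).trans_lt (Int.emod_lt_abs _ hm)
    have : |(((x.cast : ℤ) % m : ℤ) : ℝ)| < |(m : ℝ)| := by exact_mod_cast hlt
    linarith

theorem stmt_15_general (r : ℕ) (c : ℤ) (hc : Int.gcd c (r : ℤ) = 1) (A B : ℝ)
    (hA : 1 ≤ A) (hB : 1 ≤ B) (a b : ℤ)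
    (hv : (a : ZMod r) = (c : ZMod r) * (b : ZMod r)) (hv0 : ¬(a = 0 ∧ b = 0))
    (hva : |(a : ℝ)| ≤ A) (hvb : |(b : ℝ)| ≤ B)
    (hdep : ∀ w : ℤ × ℤ, (w.1 : ZMod r) = (c : ZMod r) * (w.2 : ZMod r) →
      |(w.1 : ℝ)| ≤ A → |(w.2 : ℝ)| ≤ B → a * w.2 - b * w.1 = 0) :
    a ≠ 0 ∧ b ≠ 0 := by
  have hunit : IsUnit (c : ZMod r) := (ZMod.coe_int_isUnit_iff_isCoprime c r).mpr
    (isCoprime_comm.mp (Int.isCoprime_iff_gcd_eq_one.mpr hc))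
  refine ⟨fun ha => ?_, fun hb => ?_⟩
  · have hb : b ≠ 0 := fun hb => hv0 ⟨ha, hb⟩
    have hb0 : (b : ZMod r) = 0 := by
      rwa [ha, Int.cast_zero, eq_comm, hunit.mul_right_eq_zero] at hv
    obtain ⟨u, hu⟩ := hunit.exists_right_inv
    obtain ⟨d, hd, hdB⟩ := ZMod.exists_intCast_eq_abs_le hb hb0 hvb u
    have := hdep (1, d) (by simp [hd, hu]) (by simpa using hA) hdB
    simp only [ha, zero_mul, mul_one, zero_sub, neg_eq_zero] at this
    exact hb this
  · have ha : a ≠ 0 := fun ha => hv0 ⟨ha, hb⟩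
    have ha0 : (a : ZMod r) = 0 := by rw [hv, hb, Int.cast_zero, mul_zero]
    obtain ⟨e, he, heA⟩ := ZMod.exists_intCast_eq_abs_le ha ha0 hva c
    have := hdep (e, 1) (by simp [he]) heA (by simpa using hB)
    simp only [hb, zero_mul, mul_one, sub_zero] at this
    exact ha this

/-- If `r̃ > 1`, `gcd(c, r̃) = 1`, the box `{|x| ≤ A, |y| ≤ B}` (with `A, B ≥ 1`) contains a
nonzero lattice point `v = (a,b)` of `Γ = {(x,y) : x ≡ c·y (mod r̃)}` but no lattice point of
`Γ` in the box is linearly independent from `v`, then `a·b ≠ 0`. -/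
theorem stmt_15 (r : ℕ) (hr : 1 < r) (c : ℤ) (hc : Int.gcd c (r : ℤ) = 1) (A B : ℝ)
    (hA : 1 ≤ A) (hB : 1 ≤ B) (a b : ℤ)
    (hv : (a : ZMod r) = (c : ZMod r) * (b : ZMod r)) (hv0 : ¬(a = 0 ∧ b = 0))
    (hva : |(a : ℝ)| ≤ A) (hvb : |(b : ℝ)| ≤ B)
    (hdep : ∀ w : ℤ × ℤ, (w.1 : ZMod r) = (c : ZMod r) * (w.2 : ZMod r) →
      |(w.1 : ℝ)| ≤ A → |(w.2 : ℝ)| ≤ B → a * w.2 - b * w.1 = 0) :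
    a ≠ 0 ∧ b ≠ 0 :=
  stmt_15_general r c hc A B hA hB a b hv hv0 hva hvb hdep
end

section
/- Let r ∈ ℕ. Then the set {1, 2, ..., r} is the disjoint union, over all triples (r̃, t, u) of positive integers with r̃·t²·u = r, gcd(r̃, u) = 1, and u squarefree, of the sets {t·u·d : 1 ≤ d ≤ t·r̃, gcd(r̃, d) = 1}. -/
private lemma coprime_of_fact_min {a b : ℕ} (ha : a ≠ 0) (hb : b ≠ 0)
    (h : ∀ p, min (a.factorization p) (b.factorization p) = 0) :
    Nat.gcd a b = 1 := by
  have hg : Nat.gcd a b ≠ 0 := Nat.gcd_ne_zero_left ha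
  apply Nat.eq_of_factorization_eq hg one_ne_zero
  intro p
  rw [Nat.factorization_gcd ha hb, Finsupp.inf_apply, h p]
  simp

/-- From the defining conditions, each component's factorization is determined by
those of `r` and `n`. -/
private lemma fact_formula {r n A T U D : ℕ} (hr : r ≠ 0) (hn : n ≠ 0)
    (hprod : A * T ^ 2 * U = r) (hgu : Nat.gcd A U = 1) (hsq : Squarefree U)
    (hgd : Nat.gcd A D = 1) (hmul : n = T * U * D) (hD : D ≠ 0) (p : ℕ) :
    T.factorization p = min (n.factorization p) (r.factorization p / 2) ∧
    U.factorization p = min (r.factorization p % 2)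
        (n.factorization p - r.factorization p / 2) ∧
    A.factorization p = r.factorization p - 2 * T.factorization p - U.factorization p ∧
    D.factorization p = n.factorization p - T.factorization p - U.factorization p := by
  have hA : A ≠ 0 := by rintro rfl; simp at hprod; omega
  have hT : T ≠ 0 := by rintro rfl; simp at hmul; omega
  have hU : U ≠ 0 := by rintro rfl; simp at hmul; omega
  have ha : r.factorization p
      = A.factorization p + 2 * T.factorization p + U.factorization p := by
    rw [← hprod, Nat.factorization_mul (mul_ne_zero hA (pow_ne_zero 2 hT)) hU,
      Nat.factorization_mul hA (pow_ne_zero 2 hT), Nat.factorization_pow]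
    simp [Finsupp.add_apply, mul_comm]
  have hv : n.factorization p
      = T.factorization p + U.factorization p + D.factorization p := by
    rw [hmul, Nat.factorization_mul (mul_ne_zero hT hU) hD,
      Nat.factorization_mul hT hU]
    simp [Finsupp.add_apply]
  have h1 : min (A.factorization p) (U.factorization p) = 0 := by
    rw [← Finsupp.inf_apply, ← Nat.factorization_gcd hA hU, hgu]
    simp
  have h2 : min (A.factorization p) (D.factorization p) = 0 := by
    rw [← Finsupp.inf_apply, ← Nat.factorization_gcd hA hD, hgd]
    simp
  have h3 : U.factorization p ≤ 1 :=
    (Nat.squarefree_iff_factorization_le_one hU).mp hsq p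
  refine ⟨?_, ?_, ?_, ?_⟩ <;> omega

/-- Partition identity: `{1,…,r}` is the disjoint union over triples `(r̃,t,u)` with
`r̃·t²·u = r`, `gcd(r̃,u) = 1`, `u` squarefree, of the sets
`{t·u·d : 1 ≤ d ≤ t·r̃, gcd(r̃,d) = 1}`; i.e. every `n ∈ {1,…,r}` has a unique such
representation, and every such product lies in `{1,…,r}`. -/
theorem stmt_16 (r : ℕ) (hr : 1 ≤ r) (n : ℕ) :
    n ∈ Finset.Icc 1 r ↔
      ∃! q : ℕ × ℕ × ℕ × ℕ,
        q.1 * q.2.1 ^ 2 * q.2.2.1 = r ∧ Nat.gcd q.1 q.2.2.1 = 1 ∧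
        Squarefree q.2.2.1 ∧ 1 ≤ q.2.2.2 ∧ q.2.2.2 ≤ q.2.1 * q.1 ∧
        Nat.gcd q.1 q.2.2.2 = 1 ∧ n = q.2.1 * q.2.2.1 * q.2.2.2 := by
  have hr0 : r ≠ 0 := by omega
  constructor
  · intro hmem
    rw [Finset.mem_Icc] at hmem
    obtain ⟨hn1, hnr⟩ := hmem
    have hn0 : n ≠ 0 := by omega
    -- construction of the canonical witness
    set s : ℕ := Nat.floorRoot 2 r with hs
    have hs0 : s ≠ 0 := Nat.floorRoot_ne_zero.mpr ⟨two_ne_zero, hr0⟩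
    have hsf : ∀ p, s.factorization p = r.factorization p / 2 := by
      intro p; rw [hs, Nat.factorization_floorRoot]; rfl
    set t : ℕ := Nat.gcd n s with ht
    have ht0 : t ≠ 0 := Nat.gcd_ne_zero_left hn0
    have htf : ∀ p, t.factorization p
        = min (n.factorization p) (r.factorization p / 2) := by
      intro p
      rw [ht, Nat.factorization_gcd hn0 hs0, Finsupp.inf_apply, hsf p]
    have htn : t ∣ n := Nat.gcd_dvd_left n s
    have hs2r : s ^ 2 ∣ r := Nat.floorRoot_pow_dvd
    have hm0 : r / s ^ 2 ≠ 0 := by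
      intro h
      have := Nat.mul_div_cancel' hs2r
      rw [h, mul_zero] at this
      exact hr0 this.symm
    have hmf : ∀ p, (r / s ^ 2).factorization p
        = r.factorization p - 2 * (r.factorization p / 2) := by
      intro p
      rw [Nat.factorization_div hs2r, Finsupp.tsub_apply, Nat.factorization_pow]
      simp [hsf p, mul_comm]
    have hnt0 : n / t ≠ 0 := by
      intro h
      have := Nat.mul_div_cancel' htn
      rw [h, mul_zero] at this
      exact hn0 this.symm
    have hntf : ∀ p, (n / t).factorization p
        = n.factorization p - min (n.factorization p) (r.factorization p / 2) := by
      intro p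
      rw [Nat.factorization_div htn, Finsupp.tsub_apply, htf p]
    set u : ℕ := Nat.gcd (r / s ^ 2) (n / t) with hu
    have hu0 : u ≠ 0 := Nat.gcd_ne_zero_left hm0
    have huf : ∀ p, u.factorization p
        = min (r.factorization p - 2 * (r.factorization p / 2))
            (n.factorization p - min (n.factorization p) (r.factorization p / 2)) := by
      intro p
      rw [hu, Nat.factorization_gcd hm0 hnt0, Finsupp.inf_apply,
        hmf p, hntf p]
    have hun : u ∣ n / t := Nat.gcd_dvd_right _ _
    have htun : t * u ∣ n := (Nat.dvd_div_iff_mul_dvd htn).mp hun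
    have htu0 : t * u ≠ 0 := mul_ne_zero ht0 hu0
    have ht2ur : t ^ 2 * u ∣ r := by
      rw [← Nat.factorization_le_iff_dvd (mul_ne_zero (pow_ne_zero 2 ht0) hu0) hr0]
      intro p
      rw [Nat.factorization_mul (pow_ne_zero 2 ht0) hu0, Nat.factorization_pow]
      simp only [Finsupp.add_apply, Finsupp.coe_smul, Pi.smul_apply, smul_eq_mul]
      rw [htf p, huf p]
      omega
    set A : ℕ := r / (t ^ 2 * u) with hA
    have hA0 : A ≠ 0 := by
      intro h
      have := Nat.mul_div_cancel' ht2ur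
      rw [← hA, h, mul_zero] at this
      exact hr0 this.symm
    have hAf : ∀ p, A.factorization p
        = r.factorization p - (2 * t.factorization p + u.factorization p) := by
      intro p
      rw [hA, Nat.factorization_div ht2ur, Finsupp.tsub_apply,
        Nat.factorization_mul (pow_ne_zero 2 ht0) hu0, Nat.factorization_pow]
      simp only [Finsupp.add_apply, Finsupp.coe_smul, Pi.smul_apply, smul_eq_mul]
    set d : ℕ := n / (t * u) with hd
    have hnd : n = t * u * d := (Nat.mul_div_cancel' htun).symm
    have hd0 : d ≠ 0 := by
      intro h
      rw [h, mul_zero] at hnd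
      exact hn0 hnd
    have hdf : ∀ p, d.factorization p
        = n.factorization p - (t.factorization p + u.factorization p) := by
      intro p
      rw [hd, Nat.factorization_div htun, Finsupp.tsub_apply,
        Nat.factorization_mul ht0 hu0]
      simp [Finsupp.add_apply]
    have hprodA : A * t ^ 2 * u = r := by
      rw [mul_assoc]; exact Nat.div_mul_cancel ht2ur
    have hguA : Nat.gcd A u = 1 := by
      apply coprime_of_fact_min hA0 hu0
      intro p
      rw [hAf p, huf p, htf p]
      omega
    have hsqu : Squarefree u := by
      rw [Nat.squarefree_iff_factorization_le_one hu0]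
      intro p
      rw [huf p]
      omega
    have hgdA : Nat.gcd A d = 1 := by
      apply coprime_of_fact_min hA0 hd0
      intro p
      rw [hAf p, hdf p, huf p, htf p]
      omega
    have hdle : d ≤ t * A := by
      have h1 : t * u * d ≤ t * u * (t * A) := by
        calc t * u * d = n := hnd.symm
          _ ≤ r := hnr
          _ = A * t ^ 2 * u := hprodA.symm
          _ = t * u * (t * A) := by ring
      exact Nat.le_of_mul_le_mul_left h1 (Nat.pos_of_ne_zero htu0)
    refine ⟨⟨A, t, u, d⟩, ⟨hprodA, hguA, hsqu, Nat.one_le_iff_ne_zero.mpr hd0, hdle,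
      hgdA, by rw [hnd]⟩, ?_⟩
    -- uniqueness
    rintro ⟨A', t', u', d'⟩ ⟨hprod', hgu', hsq', hd1', _, hgd', hn'⟩
    have hd0' : d' ≠ 0 := Nat.one_le_iff_ne_zero.mp hd1'
    have H1 := fact_formula hr0 hn0 hprod' hgu' hsq' hgd' hn' hd0'
    have H2 := fact_formula hr0 hn0 hprodA hguA hsqu hgdA (by rw [hnd]) hd0
    have hA0' : A' ≠ 0 := by
      rintro rfl; simp at hprod'; omega
    have ht0' : t' ≠ 0 := by
      rintro rfl; simp at hn'; omega
    have hu0' : u' ≠ 0 := by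
      rintro rfl; simp at hn'; omega
    have et : t' = t := Nat.eq_of_factorization_eq ht0' ht0 fun p => by
      rw [(H1 p).1, (H2 p).1]
    have eu : u' = u := Nat.eq_of_factorization_eq hu0' hu0 fun p => by
      rw [(H1 p).2.1, (H2 p).2.1]
    have eA : A' = A := Nat.eq_of_factorization_eq hA0' hA0 fun p => by
      rw [(H1 p).2.2.1, (H2 p).2.2.1, (H1 p).1, (H2 p).1, (H1 p).2.1, (H2 p).2.1]
    have ed : d' = d := Nat.eq_of_factorization_eq hd0' hd0 fun p => by
      rw [(H1 p).2.2.2, (H2 p).2.2.2, (H1 p).1, (H2 p).1, (H1 p).2.1, (H2 p).2.1]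
    simp [et, eu, eA, ed]
  · rintro ⟨⟨A, t, u, d⟩, ⟨hprod, _, _, hd1, hdle, _, hn⟩, -⟩
    simp only at hprod hd1 hdle hn
    rw [Finset.mem_Icc]
    have hA : A ≠ 0 := by rintro rfl; simp at hprod; omega
    have ht : t ≠ 0 := by rintro rfl; simp at hprod; omega
    have hu : u ≠ 0 := by rintro rfl; simp at hprod; omega
    constructor
    · rw [hn]
      exact Nat.one_le_iff_ne_zero.mpr
        (mul_ne_zero (mul_ne_zero ht hu) (by omega))
    · calc n = t * u * d := hn
        _ ≤ t * u * (t * A) :=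
          Nat.mul_le_mul_left _ hdle
        _ = A * t ^ 2 * u := by ring
        _ = r := hprod
end

section
/- (Weyl differencing with weights) Let I = (a, b] be a real interval with |I| = b - a ≥ 1, let g : I → ℝ be any function, (β_m)_{m ∈ I ∩ ℤ} complex numbers, and H ∈ ℕ with 1 ≤ H ≤ |I|. Then |∑_{m ∈ I} β_m e(g(m))|² ≪ (|I|/H)·∑_{m ∈ I} |β_m|² + (|I|/H)·∑_{m₁, m₂ ∈ I, 1 ≤ |m₁ - m₂| ≤ H} (1 - |m₁-m₂|/H)·β_{m₁}·conj(β_{m₂})·e(g(m₁) - g(m₂)). -/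
/-- `e(x) = exp(2πix)`. -/
noncomputable def eFun (x : ℝ) : ℂ := Complex.exp ((2 * Real.pi * x : ℝ) * Complex.I)

open Finset

lemma eFun_norm (x : ℝ) : ‖eFun x‖ = 1 := by
  simpa [eFun] using Complex.norm_exp_ofReal_mul_I (2 * Real.pi * x)

lemma eFun_conj (x : ℝ) : (starRingEnd ℂ) (eFun x) = eFun (-x) := by
  rw [eFun, eFun, ← Complex.exp_conj]
  rw [map_mul, Complex.conj_I, Complex.conj_ofReal]
  congr 1
  push_cast
  ring

lemma eFun_mul (x y : ℝ) : eFun x * eFun y = eFun (x + y) := by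
  rw [eFun, eFun, eFun, ← Complex.exp_add]
  congr 1
  push_cast
  ring

lemma weyl_key (aZ bZ : ℤ) (g : ℝ → ℝ) (β : ℤ → ℂ) (H : ℕ) (hH : 1 ≤ H) (hab : aZ ≤ bZ) :
    (H:ℝ)^2 * ‖∑ m ∈ Finset.Ioc aZ bZ, β m * eFun (g m)‖^2
      ≤ (((bZ + H - aZ).toNat : ℕ) : ℝ) *
        ((H:ℝ) * ∑ m ∈ Finset.Ioc aZ bZ, ‖β m‖^2
          + (H:ℝ) * ‖∑ p ∈ ((Finset.Ioc aZ bZ) ×ˢ (Finset.Ioc aZ bZ)).filter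
              (fun p => 1 ≤ (p.1 - p.2).natAbs ∧ (p.1 - p.2).natAbs ≤ H),
            ((1 - |(p.1 : ℝ) - (p.2 : ℝ)| / H : ℝ) : ℂ) *
              (β p.1 * (starRingEnd ℂ) (β p.2)) * eFun (g p.1 - g p.2)‖) := by
  have hH' : (1:ℤ) ≤ (H:ℤ) := by exact_mod_cast hH
  set A := Finset.Ioc aZ bZ with hA
  set N := Finset.Ioc (aZ - H) bZ with hN
  set F : ℤ → ℂ := fun m => β m * eFun (g m) with hF
  -- counting lemmas
  have count1 : ∀ m ∈ A, (N.filter fun n => m ∈ Finset.Icc (n+1) (n+(H:ℤ))).card = H := by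
    intro m hm
    rw [hA, Finset.mem_Ioc] at hm
    have he : (N.filter fun n => m ∈ Finset.Icc (n+1) (n+(H:ℤ))) = Finset.Icc (m - H) (m - 1) := by
      ext n
      simp only [hN, Finset.mem_filter, Finset.mem_Ioc, Finset.mem_Icc]
      omega
    rw [he, Int.card_Icc]
    omega
  have count2 : ∀ m1 ∈ A, ∀ m2 ∈ A,
      (N.filter fun n => m1 ∈ Finset.Icc (n+1) (n+(H:ℤ)) ∧ m2 ∈ Finset.Icc (n+1) (n+(H:ℤ))).card
        = ((H:ℤ) - ((m1 - m2).natAbs : ℤ)).toNat := by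
    intro m1 hm1 m2 hm2
    rw [hA, Finset.mem_Ioc] at hm1 hm2
    have he : (N.filter fun n => m1 ∈ Finset.Icc (n+1) (n+(H:ℤ)) ∧ m2 ∈ Finset.Icc (n+1) (n+(H:ℤ)))
        = Finset.Icc (max m1 m2 - H) (min m1 m2 - 1) := by
      ext n
      simp only [hN, Finset.mem_filter, Finset.mem_Ioc, Finset.mem_Icc]
      omega
    rw [he, Int.card_Icc]
    omega
  -- T n
  set T : ℤ → ℂ := fun n => ∑ m ∈ A, (if m ∈ Finset.Icc (n+1) (n+(H:ℤ)) then (1:ℂ) else 0) * F m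
    with hT
  have hS1 : ∑ n ∈ N, T n = (H:ℂ) * ∑ m ∈ A, F m := by
    simp only [hT]
    rw [Finset.sum_comm, Finset.mul_sum]
    refine Finset.sum_congr rfl fun m hm => ?_
    rw [← Finset.sum_mul, Finset.sum_boole, count1 m hm]
  have conjT : ∀ n, (starRingEnd ℂ) (T n)
      = ∑ m ∈ A, (if m ∈ Finset.Icc (n+1) (n+(H:ℤ)) then (1:ℂ) else 0) * (starRingEnd ℂ) (F m) := by
    intro n
    simp only [hT]
    rw [map_sum]
    refine Finset.sum_congr rfl fun m hm => ?_
    rw [map_mul, apply_ite (starRingEnd ℂ), map_one, map_zero]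
  have hFF : ∀ m1 m2 : ℤ, F m1 * (starRingEnd ℂ) (F m2)
      = (β m1 * (starRingEnd ℂ) (β m2)) * eFun (g m1 - g m2) := by
    intro m1 m2
    simp only [hF]
    rw [map_mul, eFun_conj]
    have : eFun (g m1) * eFun (-g m2) = eFun (g m1 - g m2) := by
      have h : g m1 + -g m2 = g m1 - g m2 := by ring
      rw [eFun_mul, h]
    calc β m1 * eFun (g m1) * ((starRingEnd ℂ) (β m2) * eFun (-g m2))
        = (β m1 * (starRingEnd ℂ) (β m2)) * (eFun (g m1) * eFun (-g m2)) := by ring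
      _ = (β m1 * (starRingEnd ℂ) (β m2)) * eFun (g m1 - g m2) := by rw [this]
  have hFdiag : ∀ m : ℤ, F m * (starRingEnd ℂ) (F m) = ((‖β m‖^2 : ℝ) : ℂ) := by
    intro m
    rw [Complex.mul_conj]
    congr 1
    rw [Complex.normSq_eq_norm_sq]
    simp only [hF]
    rw [norm_mul, eFun_norm, mul_one]
  -- expansion
  have hS2 : ∑ n ∈ N, T n * (starRingEnd ℂ) (T n)
      = ∑ m1 ∈ A, ∑ m2 ∈ A,
          (((((H:ℤ) - ((m1 - m2).natAbs : ℤ)).toNat : ℕ)) : ℂ) * (F m1 * (starRingEnd ℂ) (F m2)) := by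
    have expand : ∀ n, T n * (starRingEnd ℂ) (T n)
        = ∑ m1 ∈ A, ∑ m2 ∈ A,
            (if m1 ∈ Finset.Icc (n+1) (n+(H:ℤ)) ∧ m2 ∈ Finset.Icc (n+1) (n+(H:ℤ)) then (1:ℂ) else 0)
              * (F m1 * (starRingEnd ℂ) (F m2)) := by
      intro n
      rw [conjT]
      simp only [hT]
      rw [Finset.sum_mul_sum]
      refine Finset.sum_congr rfl fun m1 _ => Finset.sum_congr rfl fun m2 _ => ?_
      by_cases h1 : m1 ∈ Finset.Icc (n+1) (n+(H:ℤ)) <;>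
        by_cases h2 : m2 ∈ Finset.Icc (n+1) (n+(H:ℤ)) <;>
        simp [h1, h2]
    rw [Finset.sum_congr rfl fun n _ => expand n]
    rw [Finset.sum_comm]
    refine Finset.sum_congr rfl fun m1 hm1 => ?_
    rw [Finset.sum_comm]
    refine Finset.sum_congr rfl fun m2 hm2 => ?_
    rw [← Finset.sum_mul, Finset.sum_boole, count2 m1 hm1 m2 hm2]
  -- the off-diagonal target sum
  set SOff := ∑ p ∈ (A ×ˢ A).filter
      (fun p => 1 ≤ (p.1 - p.2).natAbs ∧ (p.1 - p.2).natAbs ≤ H),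
    ((1 - |(p.1 : ℝ) - (p.2 : ℝ)| / H : ℝ) : ℂ) *
      (β p.1 * (starRingEnd ℂ) (β p.2)) * eFun (g p.1 - g p.2) with hSOff
  have habs : ∀ m1 m2 : ℤ, |(m1:ℝ) - (m2:ℝ)| = (((m1 - m2).natAbs : ℕ) : ℝ) := by
    intro m1 m2
    rw [Nat.cast_natAbs]
    push_cast
    ring
  have hHC0 : (H:ℂ) ≠ 0 := Nat.cast_ne_zero.mpr (by omega)
  have hsplit : ∑ m1 ∈ A, ∑ m2 ∈ A,
      (((((H:ℤ) - ((m1 - m2).natAbs : ℤ)).toNat : ℕ)) : ℂ) * (F m1 * (starRingEnd ℂ) (F m2))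
      = (H:ℂ) * SOff + (((H:ℝ) * ∑ m ∈ A, ‖β m‖^2 : ℝ) : ℂ) := by
    rw [← Finset.sum_product']
    rw [← Finset.sum_filter_add_sum_filter_not (A ×ˢ A)
      (fun p => 1 ≤ (p.1 - p.2).natAbs ∧ (p.1 - p.2).natAbs ≤ H)]
    congr 1
    · -- off-diagonal part
      rw [hSOff, Finset.mul_sum]
      refine Finset.sum_congr rfl fun p hp => ?_
      rw [Finset.mem_filter] at hp
      obtain ⟨-, h1, h2⟩ := hp
      rw [hFF]
      have htn : ((H:ℤ) - (((p.1 - p.2).natAbs : ℕ) : ℤ)).toNat = H - (p.1 - p.2).natAbs := by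
        omega
      rw [htn, habs, Nat.cast_sub h2]
      have hcoef : (((H:ℕ):ℂ) - ((((p.1 - p.2).natAbs : ℕ) : ℕ):ℂ))
          = (H:ℂ) * (((1 - (((p.1 - p.2).natAbs : ℕ) : ℝ)/(H:ℝ)) : ℝ) : ℂ) := by
        push_cast
        field_simp
      rw [hcoef]
      ring
    · -- diagonal part
      have hsub : A.diag ⊆ (A ×ˢ A).filter
          (fun p => ¬(1 ≤ (p.1 - p.2).natAbs ∧ (p.1 - p.2).natAbs ≤ H)) := by
        intro p hp
        rw [Finset.mem_diag] at hp
        rw [Finset.mem_filter, Finset.mem_product]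
        refine ⟨⟨hp.1, hp.2 ▸ hp.1⟩, ?_⟩
        rw [← hp.2]
        simp
      have hzero : ∀ p ∈ (A ×ˢ A).filter
          (fun p => ¬(1 ≤ (p.1 - p.2).natAbs ∧ (p.1 - p.2).natAbs ≤ H)),
          p ∉ A.diag →
          (((((H:ℤ) - (((p.1 - p.2).natAbs : ℕ) : ℤ)).toNat : ℕ)) : ℂ)
            * (F p.1 * (starRingEnd ℂ) (F p.2)) = 0 := by
        intro p hp hnd
        rw [Finset.mem_filter, Finset.mem_product] at hp
        rw [Finset.mem_diag] at hnd
        have h1 : p.1 ≠ p.2 := fun h => hnd ⟨hp.1.1, h⟩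
        have h2 := hp.2
        push_neg at h2
        have h5 : ((H:ℤ) - (((p.1 - p.2).natAbs : ℕ) : ℤ)).toNat = 0 := by
          have h3 : p.1 - p.2 ≠ 0 := sub_ne_zero_of_ne h1
          have h4 : 1 ≤ (p.1 - p.2).natAbs := by omega
          have h6 := h2 h4
          omega
        rw [h5]
        simp
      rw [← Finset.sum_subset hsub hzero, Finset.sum_diag]
      have hterm : ∀ m ∈ A,
          (((((H:ℤ) - (((m - m).natAbs : ℕ) : ℤ)).toNat : ℕ)) : ℂ)
            * (F m * (starRingEnd ℂ) (F m))
          = (H:ℂ) * ((‖β m‖^2 : ℝ) : ℂ) := by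
        intro m hm
        rw [hFdiag]
        congr 1
        simp
      rw [Finset.sum_congr rfl hterm, ← Finset.mul_sum]
      push_cast
      ring
  have hTT : ∀ n, T n * (starRingEnd ℂ) (T n) = ((‖T n‖^2 : ℝ) : ℂ) := by
    intro n
    rw [Complex.mul_conj]
    congr 1
    rw [Complex.normSq_eq_norm_sq]
  have hsum2 : ((∑ n ∈ N, ‖T n‖^2 : ℝ) : ℂ)
      = (H:ℂ) * SOff + (((H:ℝ) * ∑ m ∈ A, ‖β m‖^2 : ℝ) : ℂ) := by
    rw [← hsplit, ← hS2, Finset.sum_congr rfl fun n _ => hTT n]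
    push_cast
    rfl
  have hre : ∑ n ∈ N, ‖T n‖^2 ≤ (H:ℝ) * ∑ m ∈ A, ‖β m‖^2 + (H:ℝ) * ‖SOff‖ := by
    have h1 := congrArg Complex.re hsum2
    rw [Complex.ofReal_re, Complex.add_re, Complex.ofReal_re] at h1
    have h2 : ((H:ℂ) * SOff).re ≤ (H:ℝ) * ‖SOff‖ := by
      calc ((H:ℂ) * SOff).re ≤ ‖(H:ℂ) * SOff‖ := Complex.re_le_norm _
        _ = (H:ℝ) * ‖SOff‖ := by rw [norm_mul]; simp
    linarith
  have hFe : ∑ m ∈ A, β m * eFun (g m) = ∑ m ∈ A, F m := rfl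
  have hCS : ‖(H:ℂ) * ∑ m ∈ A, F m‖^2 ≤ (N.card : ℝ) * ∑ n ∈ N, ‖T n‖^2 := by
    rw [← hS1]
    calc ‖∑ n ∈ N, T n‖^2 ≤ (∑ n ∈ N, ‖T n‖)^2 :=
          pow_le_pow_left₀ (norm_nonneg _) (norm_sum_le N T) 2
      _ ≤ (N.card : ℝ) * ∑ n ∈ N, ‖T n‖^2 := by
          have h := sq_sum_le_card_mul_sum_sq (s := N) (f := fun n => ‖T n‖)
          simpa using h
  have hcard : N.card = (bZ + H - aZ).toNat := by
    rw [hN, Int.card_Ioc]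
    omega
  have hnormH : ‖(H:ℂ) * ∑ m ∈ A, F m‖^2 = (H:ℝ)^2 * ‖∑ m ∈ A, F m‖^2 := by
    rw [norm_mul, mul_pow]
    congr 2
    simp
  rw [hcard] at hCS
  calc (H:ℝ)^2 * ‖∑ m ∈ A, β m * eFun (g m)‖^2
      = ‖(H:ℂ) * ∑ m ∈ A, F m‖^2 := by rw [hnormH, hFe]
    _ ≤ (((bZ + H - aZ).toNat : ℕ) : ℝ) * ∑ n ∈ N, ‖T n‖^2 := hCS
    _ ≤ (((bZ + H - aZ).toNat : ℕ) : ℝ)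
        * ((H:ℝ) * ∑ m ∈ A, ‖β m‖^2 + (H:ℝ) * ‖SOff‖) := by
        exact mul_le_mul_of_nonneg_left hre (by positivity)


lemma weyl_arith (D Hr S B W C : ℝ) (hH : 0 < Hr) (hB : 0 ≤ B) (hW : 0 ≤ W)
    (hCle : C ≤ 3 * D) (key : Hr^2 * S^2 ≤ C * (Hr*B + Hr*W)) :
    S^2 ≤ 3 * (D/Hr*B) + 3 * (D/Hr*W) := by
  have hne : Hr ≠ 0 := ne_of_gt hH
  have h1 : Hr^2 * S^2 ≤ 3*D*(Hr*B+Hr*W) := by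
    refine le_trans key (mul_le_mul_of_nonneg_right hCle ?_)
    positivity
  have h2 : S^2 ≤ (3*D*(Hr*B+Hr*W))/Hr^2 := by
    rw [le_div_iff₀ (by positivity)]
    nlinarith [h1]
  calc S^2 ≤ (3*D*(Hr*B+Hr*W))/Hr^2 := h2
    _ = 3 * (D/Hr*B) + 3 * (D/Hr*W) := by field_simp

/-- Weyl differencing with weights: for an interval `I = (a,b]` of length `≥ 1`, any
`g : I → ℝ`, weights `β`, and `H ∈ ℕ` with `1 ≤ H ≤ |I|`,
`|∑_{m ∈ I} β_m e(g(m))|² ≪ (|I|/H)·∑_{m ∈ I} |β_m|²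
  + (|I|/H)·|∑_{m₁,m₂ ∈ I, 1 ≤ |m₁-m₂| ≤ H} (1 - |m₁-m₂|/H)·β_{m₁}·conj(β_{m₂})
      ·e(g(m₁)-g(m₂))|`. -/
theorem stmt_17 : ∃ C : ℝ, 0 < C ∧ ∀ (a b : ℝ) (g : ℝ → ℝ) (β : ℤ → ℂ) (H : ℕ),
    1 ≤ b - a → 1 ≤ H → (H : ℝ) ≤ b - a →
    ‖∑ m ∈ Finset.Ioc ⌊a⌋ ⌊b⌋, β m * eFun (g m)‖ ^ 2
      ≤ C * ((b - a) / H * ∑ m ∈ Finset.Ioc ⌊a⌋ ⌊b⌋, ‖β m‖ ^ 2)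
        + C * ((b - a) / H *
          ‖∑ p ∈ ((Finset.Ioc ⌊a⌋ ⌊b⌋) ×ˢ (Finset.Ioc ⌊a⌋ ⌊b⌋)).filter
              (fun p => 1 ≤ (p.1 - p.2).natAbs ∧ (p.1 - p.2).natAbs ≤ H),
            ((1 - |(p.1 : ℝ) - (p.2 : ℝ)| / H : ℝ) : ℂ) *
              (β p.1 * (starRingEnd ℂ) (β p.2)) * eFun (g p.1 - g p.2)‖) := by
  refine ⟨3, by norm_num, ?_⟩
  intro a b g β H hba hH1 hHba
  have hab : ⌊a⌋ ≤ ⌊b⌋ := Int.floor_le_floor (by linarith)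
  have hHpos : (0:ℝ) < H := by exact_mod_cast hH1
  have key := weyl_key ⌊a⌋ ⌊b⌋ g β H hH1 hab
  have hcle : (((⌊b⌋ + H - ⌊a⌋).toNat : ℕ) : ℝ) ≤ 3 * (b - a) := by
    have h1 : ((⌊b⌋:ℝ)) ≤ b := Int.floor_le b
    have h2 : a - 1 < (⌊a⌋:ℝ) := Int.sub_one_lt_floor a
    have h4 : (0:ℤ) ≤ ⌊b⌋ + H - ⌊a⌋ := by omega
    have h5 : (((⌊b⌋ + (H:ℤ) - ⌊a⌋).toNat : ℕ) : ℝ) = ((⌊b⌋:ℝ) + H - ⌊a⌋) := by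
      rw [← Int.cast_natCast, Int.toNat_of_nonneg h4]
      push_cast
      ring
    rw [h5]
    linarith
  exact weyl_arith (b - a) (H:ℝ) _ _ _ _ hHpos
    (Finset.sum_nonneg fun m _ => by positivity) (norm_nonneg _) hcle key
end
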